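/- With the Zhelobenko operators R_{kl} = ∂_{kl} + ∑_{j>l} z_{lj}∂_{kj} acting on polynomials in the entries z_{ij} (i<j) of a generic upper unitriangular matrix Z, and Φ any determinant of a matrix consisting of some rows of Z (indexed by a set I) and constant rows: R_{kl}² Φ = 0 for all k < l. -/

import Mathlib

open MvPolynomial

/-!
`R_{kl}` is a derivation, so applying it to a determinant differentiates one row at a time. It
kills constant rows and rows `i ≠ k` of `Z`, and it sends row `k` of `Z` to row `l`, which it
kills in turn. Hence in `R_{kl}² Φ` every term either differentiates one row twice, or contains
a zero row, or contains row `l` of `Z` twice; all of these determinants vanish.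
-/

/-- Polynomials in the entries `z_{ij}` (1-based indices) of a generic matrix. -/
abbrev Pz : Type := MvPolynomial (ℕ × ℕ) ℂ

/-- The variable `z_{ij}`. -/
noncomputable def zv (i j : ℕ) : Pz := X (i, j)

/-- The `j`-th entry of the `i`-th row (1-based) of the generic upper
unitriangular matrix `Z`: `(0, …, 0, 1, z_{i(i+1)}, …)`. -/
noncomputable def Zrow (i j : ℕ) : Pz :=
  if i = j then 1 else if i < j then zv i j else 0

/-- The Zhelobenko operator `R_{kl} = ∂_{kl} + ∑_{j>l} z_{lj} ∂_{kj}` on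
polynomials in the entries of the generic upper unitriangular `N × N` matrix. -/
noncomputable def Rz (N k l : ℕ) (p : Pz) : Pz :=
  pderiv (k, l) p + ∑ j ∈ Finset.Icc (l + 1) N, zv l j * pderiv (k, j) p

/-- The `N × N` matrix whose first `s` rows are the rows of the generic upper
unitriangular matrix `Z` with (1-based) indices `e 0, …, e (s-1)`, and whose
remaining `t` rows are constant rows `c`. -/
noncomputable def ZconstMat (N s t : ℕ) (hst : s + t = N) (e : Fin s → ℕ)
    (c : Fin t → Fin N → ℂ) : Matrix (Fin N) (Fin N) Pz :=
  Matrix.of fun a b =>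
    if h : (a : ℕ) < s then Zrow (e ⟨a, h⟩) ((b : ℕ) + 1)
    else MvPolynomial.C (c ⟨(a : ℕ) - s, by have := a.isLt; omega⟩ b)

namespace Derivation

variable {R A : Type*} [CommSemiring R] [CommRing A] [Algebra R A] (D : Derivation R A A)

theorem leibniz_finset_prod {ι : Type*} [DecidableEq ι] (s : Finset ι) (f : ι → A) :
    D (∏ i ∈ s, f i) = ∑ i ∈ s, (∏ j ∈ s.erase i, f j) * D (f i) := by
  induction s using Finset.induction_on with
  | empty => simp
  | @insert a s ha ih =>
    rw [Finset.prod_insert ha, D.leibniz, smul_eq_mul, smul_eq_mul, ih, Finset.mul_sum,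
      Finset.sum_insert ha, Finset.erase_insert ha, add_comm]
    congr 1
    refine Finset.sum_congr rfl fun i hi => ?_
    rw [Finset.erase_insert_of_ne (by rintro rfl; exact ha hi),
      Finset.prod_insert (fun h => ha (Finset.mem_of_mem_erase h)), mul_assoc]

theorem map_det {n : Type*} [Fintype n] [DecidableEq n] (M : Matrix n n A) :
    D M.det = ∑ i, (M.updateRow i (D ∘ M i)).det := by
  simp only [Matrix.det_apply, map_sum]
  rw [Finset.sum_comm]
  refine Finset.sum_congr rfl fun σ _ => ?_
  rw [Units.smul_def, map_zsmul, ← Units.smul_def, D.leibniz_finset_prod, ← Finset.smul_sum,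
    ← Equiv.sum_comp σ fun x => ∏ j, M.updateRow x (D ∘ M x) (σ j) j]
  congr 1
  refine Finset.sum_congr rfl fun i _ => ?_
  rw [← Finset.mul_prod_erase _ _ (Finset.mem_univ i), Matrix.updateRow_self, mul_comm]
  congr 1
  refine Finset.prod_congr rfl fun j hj => ?_
  rw [Matrix.updateRow_ne (σ.injective.ne (Finset.ne_of_mem_erase hj))]

theorem map_map_det_eq_zero {n : Type*} [Fintype n] [DecidableEq n] (M : Matrix n n A)
    (v : n → A) (hv : D ∘ v = 0) (hM : ∀ i, D ∘ M i = 0 ∨ D ∘ M i = v) :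
    D (D M.det) = 0 := by
  rw [D.map_det, map_sum]
  refine Finset.sum_eq_zero fun i _ => ?_
  rw [D.map_det]
  refine Finset.sum_eq_zero fun j _ => ?_
  by_cases hji : j = i
  · subst hji
    have hDD : D ∘ (D ∘ M j) = 0 := by
      rcases hM j with h | h <;> rw [h]
      · exact funext fun _ => D.map_zero
      · exact hv
    exact Matrix.det_eq_zero_of_row_eq_zero j fun b => by simpa using congrFun hDD b
  set M' := M.updateRow i (D ∘ M i) with hM'
  have hrow_i : M'.updateRow j (D ∘ M' j) i = D ∘ M i := by
    rw [Matrix.updateRow_ne (Ne.symm hji), hM', Matrix.updateRow_self]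
  have hrow_j : M'.updateRow j (D ∘ M' j) j = D ∘ M j := by
    rw [Matrix.updateRow_self, hM', Matrix.updateRow_ne hji]
  rcases hM i with hi | hi
  · exact Matrix.det_eq_zero_of_row_eq_zero i fun b => by rw [hrow_i, hi]; rfl
  rcases hM j with hj | hj
  · exact Matrix.det_eq_zero_of_row_eq_zero j fun b => by rw [hrow_j, hj]; rfl
  exact Matrix.det_zero_of_row_eq hji (by rw [hrow_i, hrow_j, hi, hj])

end Derivation

noncomputable def zhelobenkoDerivation (N k l : ℕ) : Derivation ℂ Pz Pz :=
  pderiv (k, l) + ∑ j ∈ Finset.Icc (l + 1) N, zv l j • pderiv (k, j)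

theorem zhelobenkoDerivation_apply (N k l : ℕ) (p : Pz) :
    zhelobenkoDerivation N k l p = Rz N k l p := by
  rw [zhelobenkoDerivation, Derivation.add_apply, ← Derivation.coeFnAddMonoidHom_apply
    (∑ _ ∈ _, _), map_sum, Finset.sum_apply]
  simp only [Derivation.coeFnAddMonoidHom_apply, Derivation.smul_apply, smul_eq_mul, Rz]

theorem pderiv_Zrow (a b i j : ℕ) :
    pderiv (a, b) (Zrow i j) = if a = i ∧ b = j ∧ i < j then 1 else 0 := by
  unfold Zrow zv
  split_ifs <;> simp_all [pderiv_X]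

theorem Rz_C (N k l : ℕ) (x : ℂ) : Rz N k l (C x) = 0 := by
  simp [Rz]

theorem Rz_Zrow_of_ne (N k l : ℕ) {i : ℕ} (j : ℕ) (hik : i ≠ k) : Rz N k l (Zrow i j) = 0 := by
  simp [Rz, pderiv_Zrow, Ne.symm hik]

theorem Rz_Zrow_self (N : ℕ) {k l j : ℕ} (hkl : k < l) (hj : j ≤ N) :
    Rz N k l (Zrow k j) = Zrow l j := by
  simp only [Rz, pderiv_Zrow, true_and, mul_ite, mul_one, mul_zero]
  rcases lt_trichotomy j l with h | rfl | h
  · simp only [Zrow, h.ne', h.not_gt, false_and, if_false, zero_add]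
    exact Finset.sum_eq_zero fun m hm => if_neg (by simp at hm; omega)
  · simp [Zrow, hkl]
  · simp [Zrow, h.ne, h, hkl.trans h, hj]

theorem zhelobenko_sq_zero_general (N s t : ℕ) (hst : s + t = N)
    (e : Fin s → ℕ)
    (c : Fin t → Fin N → ℂ) (k l : ℕ) (hkl : k < l) :
    Rz N k l (Rz N k l (ZconstMat N s t hst e c).det) = 0 := by
  set D := zhelobenkoDerivation N k l
  have hD (p : Pz) : D p = Rz N k l p := zhelobenkoDerivation_apply N k l p
  rw [← hD, ← hD]
  refine D.map_map_det_eq_zero _ (fun b => Zrow l (b + 1)) ?_ fun a => ?_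
  · funext b
    exact (hD _).trans (Rz_Zrow_of_ne N k l _ hkl.ne')
  by_cases hrow_k : ∃ h : (a : ℕ) < s, e ⟨a, h⟩ = k
  · obtain ⟨ha, hek⟩ := hrow_k
    refine Or.inr (funext fun b => ?_)
    simp only [Function.comp_apply, ZconstMat, Matrix.of_apply, dif_pos ha, hek, hD]
    exact Rz_Zrow_self N hkl b.isLt
  · refine Or.inl (funext fun b => ?_)
    simp only [Function.comp_apply, ZconstMat, Matrix.of_apply, hD, Pi.zero_apply]
    split_ifs with ha
    · exact Rz_Zrow_of_ne N k l _ fun hek => hrow_k ⟨ha, hek⟩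
    · exact Rz_C N k l _

/-- square-nilpotency of the Zhelobenko operators on determinants
built from rows of the generic unipotent matrix `Z` (indexed by the strictly
monotone `e`) together with constant rows: `R_{kl}² Φ = 0` for all `k < l`. -/
theorem zhelobenko_sq_zero (N s t : ℕ) (hst : s + t = N)
    (e : Fin s → ℕ) (he : StrictMono e) (hbound : ∀ a, 1 ≤ e a ∧ e a ≤ N)
    (c : Fin t → Fin N → ℂ) (k l : ℕ) (hk : 1 ≤ k) (hkl : k < l) (hl : l ≤ N) :
    Rz N k l (Rz N k l (ZconstMat N s t hst e c).det) = 0 :=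
  zhelobenko_sq_zero_general N s t hst e c k l hkl
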